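/- Let 1 < p < ∞ and C > 0, and let X be a complex Banach space satisfying the p-uniform convexity inequality with constant C. Let ε ∈ [0, 1) be such that (1+C)^{1/p} (1−ε) > 1. Then for every connected finite weighted graph 𝒢 = (V, ω) with all degrees positive such that ‖A_𝒢‖_{B(L^p_0(V,ν;X))} ≤ ε, every f ∈ L^p_0(V,ν;X) satisfies ‖f‖_{L^p(V,ν;X)} ≤ (1+C)^{−1/p} (1−ε)^{−1} ‖∇f‖_{L^p(V×V,ℙ;X)}; in particular π_{p,𝒢}(X) ≤ (1+C)^{−1/p} (1−ε)^{−1} < 1. -/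

import Mathlib

open scoped BigOperators
open Finset MeasureTheory

noncomputable section

variable {V : Type*}

def wdeg [Fintype V] (ω : V → V → ℝ) (s : V) : ℝ := ∑ t, ω s t

def nu [Fintype V] (ω : V → V → ℝ) (s : V) : ℝ := wdeg ω s / ∑ t, wdeg ω t

def edgeP [Fintype V] (ω : V → V → ℝ) (s t : V) : ℝ := ω s t / ∑ u, ∑ v, ω u v

def SymmW (ω : V → V → ℝ) : Prop := ∀ s t, ω s t = ω t s

def NonnegW (ω : V → V → ℝ) : Prop := ∀ s t, 0 ≤ ω s t

def ConnW (ω : V → V → ℝ) : Prop := (SimpleGraph.fromRel fun s t => 0 < ω s t).Connected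

def lpNormW [Fintype V] (ω : V → V → ℝ) (p : ℝ) {X : Type*} [NormedAddCommGroup X]
    (f : V → X) : ℝ := (∑ s, nu ω s * ‖f s‖ ^ p) ^ (1 / p)

def gradNormW [Fintype V] (ω : V → V → ℝ) (p : ℝ) {X : Type*} [NormedAddCommGroup X]
    (f : V → X) : ℝ := (∑ s, ∑ t, edgeP ω s t * ‖f t - f s‖ ^ p) ^ (1 / p)

def poincareConst [Fintype V] (ω : V → V → ℝ) (p : ℝ) (X : Type*) [NormedAddCommGroup X] : ℝ :=
  sInf {π : ℝ | 0 ≤ π ∧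
    ∀ f : V → X, (⨅ x : X, lpNormW ω p fun s => f s - x) ≤ π * gradNormW ω p f}

def markovW [Fintype V] (ω : V → V → ℝ) {X : Type*} [AddCommGroup X] [Module ℝ X]
    (f : V → X) (s : V) : X := (wdeg ω s)⁻¹ • ∑ t, ω s t • f t

/-- `X` satisfies the p-uniform convexity inequality with constant `C`: for every finite
probability space and every `X`-valued random variable `U`,
`‖𝔼U‖^p + C·𝔼[‖U − 𝔼U‖^p] ≤ 𝔼[‖U‖^p]`. -/
def PUC (X : Type*) [NormedAddCommGroup X] [Module ℝ X] (p C : ℝ) : Prop :=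
  ∀ (n : ℕ) (μ : Fin n → ℝ), (∀ i, 0 ≤ μ i) → (∑ i, μ i) = 1 →
    ∀ U : Fin n → X,
      ‖∑ i, μ i • U i‖ ^ p + C * ∑ i, μ i * ‖U i - ∑ j, μ j • U j‖ ^ p ≤ ∑ i, μ i * ‖U i‖ ^ p

/- Put `g = A f`. At each vertex `s`, uniform convexity for the transition
probabilities `ω(s,·)/d(s)` and the variable `t ↦ f t - f s`, whose mean is `g s - f s`, gives
`‖g s - f s‖^p + C 𝔼_t ‖f t - g s‖^p ≤ 𝔼_t ‖f t - f s‖^p`; averaging over `ν` yields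
`a + C b ≤ ‖∇f‖^p` with `a = ‖f - g‖_p^p` and `b = 𝔼_ℙ ‖f t - g s‖^p`. Since both marginals of `ℙ`
are `ν`, Minkowski's inequality bounds `‖f‖_p - ‖g‖_p` by both `a^{1/p}` and `b^{1/p}`, while
`‖g‖_p ≤ ε ‖f‖_p`; hence `(1 + C) ((1 - ε) ‖f‖_p)^p ≤ a + C b ≤ ‖∇f‖^p`. -/

theorem weighted_minkowski {ι : Type*} [Fintype ι] {X : Type*} [NormedAddCommGroup X]
    {p : ℝ} (hp : 1 ≤ p) (w : ι → ℝ) (hw : ∀ i, 0 ≤ w i) (f g : ι → X) :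
    (∑ i, w i * ‖f i + g i‖ ^ p) ^ (1 / p) ≤
      (∑ i, w i * ‖f i‖ ^ p) ^ (1 / p) + (∑ i, w i * ‖g i‖ ^ p) ^ (1 / p) := by
  have hp0 : 0 < p := zero_lt_one.trans_le hp
  have absorb : ∀ i {c : ℝ}, 0 ≤ c → w i * c ^ p = (w i ^ (1 / p) * c) ^ p := fun i c hc => by
    rw [Real.mul_rpow (Real.rpow_nonneg (hw i) _) hc, ← Real.rpow_mul (hw i),
      one_div_mul_cancel hp0.ne', Real.rpow_one]
  have hw' : ∀ i, 0 ≤ w i ^ (1 / p) := fun i => Real.rpow_nonneg (hw i) _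
  calc (∑ i, w i * ‖f i + g i‖ ^ p) ^ (1 / p)
      ≤ (∑ i, (w i ^ (1 / p) * ‖f i‖ + w i ^ (1 / p) * ‖g i‖) ^ p) ^ (1 / p) := by
        refine Real.rpow_le_rpow (Finset.sum_nonneg fun i _ => mul_nonneg (hw i) (by positivity))
          (Finset.sum_le_sum fun i _ => ?_) (by positivity)
        rw [absorb i (norm_nonneg _), ← mul_add]
        exact Real.rpow_le_rpow (mul_nonneg (hw' i) (norm_nonneg _))
          (mul_le_mul_of_nonneg_left (norm_add_le _ _) (hw' i)) hp0.le
    _ ≤ (∑ i, (w i ^ (1 / p) * ‖f i‖) ^ p) ^ (1 / p)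
          + (∑ i, (w i ^ (1 / p) * ‖g i‖) ^ p) ^ (1 / p) :=
        Real.Lp_add_le_of_nonneg univ hp (fun i _ => mul_nonneg (hw' i) (norm_nonneg _))
          (fun i _ => mul_nonneg (hw' i) (norm_nonneg _))
    _ = _ := by simp only [← absorb _ (norm_nonneg _)]

namespace PUC

variable {X : Type*} [NormedAddCommGroup X] [Module ℝ X] {p C : ℝ}

theorem of_fintype (hX : PUC X p C) {ι : Type*} [Fintype ι] (μ : ι → ℝ) (hμ0 : ∀ i, 0 ≤ μ i)
    (hμ1 : ∑ i, μ i = 1) (U : ι → X) :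
    ‖∑ i, μ i • U i‖ ^ p + C * ∑ i, μ i * ‖U i - ∑ j, μ j • U j‖ ^ p ≤ ∑ i, μ i * ‖U i‖ ^ p := by
  let e := (Fintype.equivFin ι).symm
  have h := hX _ (μ ∘ e) (fun i => hμ0 _) ((e.sum_comp μ).trans hμ1) (U ∘ e)
  simp only [Function.comp_apply] at h
  rwa [e.sum_comp (fun i => μ i • U i), e.sum_comp (fun i => μ i * ‖U i - ∑ j, μ j • U j‖ ^ p),
    e.sum_comp (fun i => μ i * ‖U i‖ ^ p)] at h

theorem of_fintype_sub (hX : PUC X p C) {ι : Type*} [Fintype ι] (μ : ι → ℝ)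
    (hμ0 : ∀ i, 0 ≤ μ i) (hμ1 : ∑ i, μ i = 1) (U : ι → X) (x : X) :
    ‖∑ i, μ i • U i - x‖ ^ p + C * ∑ i, μ i * ‖U i - ∑ j, μ j • U j‖ ^ p ≤
      ∑ i, μ i * ‖U i - x‖ ^ p := by
  have hmean : ∑ i, μ i • (U i - x) = ∑ i, μ i • U i - x := by
    simp only [smul_sub, Finset.sum_sub_distrib, ← Finset.sum_smul, hμ1, one_smul]
  simpa only [hmean, sub_sub_sub_cancel_right] using hX.of_fintype μ hμ0 hμ1 (U · - x)

end PUC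

section WeightedGraph

variable [Fintype V] {ω : V → V → ℝ}

theorem wdeg_nonneg (hnn : NonnegW ω) (s : V) : 0 ≤ wdeg ω s :=
  Finset.sum_nonneg fun t _ => hnn s t

theorem nu_nonneg (hnn : NonnegW ω) (s : V) : 0 ≤ nu ω s :=
  div_nonneg (wdeg_nonneg hnn s) (Finset.sum_nonneg fun t _ => wdeg_nonneg hnn t)

theorem edgeP_nonneg (hnn : NonnegW ω) (s t : V) : 0 ≤ edgeP ω s t :=
  div_nonneg (hnn s t) (Finset.sum_nonneg fun u _ => wdeg_nonneg hnn u)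

theorem sum_nu [Nonempty V] (hdeg : ∀ s, 0 < wdeg ω s) : ∑ s, nu ω s = 1 := by
  simp only [nu, ← Finset.sum_div]
  exact div_self (Finset.sum_pos (fun s _ => hdeg s) univ_nonempty).ne'

theorem sum_transition (hdeg : ∀ s, 0 < wdeg ω s) (s : V) : ∑ t, ω s t / wdeg ω s = 1 := by
  rw [← Finset.sum_div]
  exact div_self (hdeg s).ne'

theorem nu_mul_transition (hdeg : ∀ s, 0 < wdeg ω s) (s t : V) :
    nu ω s * (ω s t / wdeg ω s) = edgeP ω s t := by
  rw [nu, edgeP, div_mul_div_comm, mul_comm, mul_div_mul_right _ _ (hdeg s).ne']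
  rfl

theorem markovW_eq_sum {X : Type*} [AddCommGroup X] [Module ℝ X] (f : V → X) (s : V) :
    markovW ω f s = ∑ t, (ω s t / wdeg ω s) • f t := by
  simp only [markovW, Finset.smul_sum, smul_smul, div_eq_inv_mul]

theorem sum_sum_edgeP_mul_left (h : V → ℝ) :
    ∑ s, ∑ t, edgeP ω s t * h s = ∑ s, nu ω s * h s := by
  simp only [← Finset.sum_mul, edgeP, nu, ← Finset.sum_div]
  rfl

theorem sum_sum_edgeP_mul_right (hsym : SymmW ω) (h : V → ℝ) :
    ∑ s, ∑ t, edgeP ω s t * h t = ∑ t, nu ω t * h t := by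
  rw [Finset.sum_comm]
  simp only [← Finset.sum_mul, edgeP, nu, ← Finset.sum_div, hsym _]
  rfl

variable {X : Type*} [NormedAddCommGroup X]

theorem lpNormW_nonneg (hnn : NonnegW ω) (p : ℝ) (f : V → X) : 0 ≤ lpNormW ω p f :=
  Real.rpow_nonneg (Finset.sum_nonneg fun s _ => mul_nonneg (nu_nonneg hnn s) (by positivity)) _

theorem gradNormW_sub_const (p : ℝ) (f : V → X) (x : X) :
    gradNormW ω p (fun s => f s - x) = gradNormW ω p f := by
  simp only [gradNormW, sub_sub_sub_cancel_right]

theorem lpNormW_le_add (hnn : NonnegW ω) {p : ℝ} (hp : 1 ≤ p) (f g : V → X) :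
    lpNormW ω p f ≤ (∑ s, nu ω s * ‖f s - g s‖ ^ p) ^ (1 / p) + lpNormW ω p g := by
  simpa only [lpNormW, Pi.sub_apply, sub_add_cancel] using weighted_minkowski hp (nu ω) (nu_nonneg hnn) (f - g) g

theorem lpNormW_le_add_edge (hsym : SymmW ω) (hnn : NonnegW ω) {p : ℝ} (hp : 1 ≤ p)
    (f g : V → X) :
    lpNormW ω p f ≤ (∑ s, ∑ t, edgeP ω s t * ‖f t - g s‖ ^ p) ^ (1 / p) + lpNormW ω p g := by
  have h := weighted_minkowski hp (fun x : V × V => edgeP ω x.1 x.2)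
    (fun x => edgeP_nonneg hnn x.1 x.2) (fun x => f x.2 - g x.1) (fun x => g x.1)
  simp only [sub_add_cancel, Fintype.sum_prod_type, sum_sum_edgeP_mul_left,
    sum_sum_edgeP_mul_right hsym (fun t => ‖f t‖ ^ p)] at h
  exact h

theorem energy_le_gradient [Module ℝ X] {p C : ℝ} (hX : PUC X p C) (hnn : NonnegW ω)
    (hdeg : ∀ s, 0 < wdeg ω s) (f : V → X) :
    ∑ s, nu ω s * ‖f s - markovW ω f s‖ ^ p
        + C * ∑ s, ∑ t, edgeP ω s t * ‖f t - markovW ω f s‖ ^ p ≤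
      ∑ s, ∑ t, edgeP ω s t * ‖f t - f s‖ ^ p := by
  have hvertex (s : V) := hX.of_fintype_sub (fun t => ω s t / wdeg ω s)
    (fun t => div_nonneg (hnn s t) (hdeg s).le) (sum_transition hdeg s) f (f s)
  simp only [← markovW_eq_sum, norm_sub_rev (markovW ω f _) (f _)] at hvertex
  have hedge (s : V) (q : V → ℝ) :
      nu ω s * ∑ t, ω s t / wdeg ω s * q t = ∑ t, edgeP ω s t * q t := by
    simp only [Finset.mul_sum, ← mul_assoc, nu_mul_transition hdeg]
  calc _ = ∑ s, nu ω s * (‖f s - markovW ω f s‖ ^ p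
          + C * ∑ t, ω s t / wdeg ω s * ‖f t - markovW ω f s‖ ^ p) := by
        simp only [mul_add, Finset.sum_add_distrib, mul_left_comm (nu ω _) C, hedge,
          ← Finset.mul_sum]
    _ ≤ ∑ s, nu ω s * ∑ t, ω s t / wdeg ω s * ‖f t - f s‖ ^ p :=
        Finset.sum_le_sum fun s _ => mul_le_mul_of_nonneg_left (hvertex s) (nu_nonneg hnn s)
    _ = _ := by simp only [hedge]

theorem mul_lpNormW_le_gradNormW [Module ℝ X] {p C ε : ℝ} (hp : 1 ≤ p) (hC : 0 ≤ C)
    (hX : PUC X p C) (hε : ε < 1) (hsym : SymmW ω) (hnn : NonnegW ω)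
    (hdeg : ∀ s, 0 < wdeg ω s) (f : V → X)
    (hAf : lpNormW ω p (markovW ω f) ≤ ε * lpNormW ω p f) :
    (1 + C) ^ (1 / p) * (1 - ε) * lpNormW ω p f ≤ gradNormW ω p f := by
  have hp0 : 0 < p := zero_lt_one.trans_le hp
  have hr : 0 ≤ (1 - ε) * lpNormW ω p f :=
    mul_nonneg (by linarith) (lpNormW_nonneg hnn p f)
  have ha : ((1 - ε) * lpNormW ω p f) ^ p ≤ ∑ s, nu ω s * ‖f s - markovW ω f s‖ ^ p := by
    rw [← Real.le_rpow_inv_iff_of_pos hr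
      (Finset.sum_nonneg fun s _ => mul_nonneg (nu_nonneg hnn s) (by positivity)) hp0, ← one_div]
    linarith [lpNormW_le_add hnn hp f (markovW ω f)]
  have hb : ((1 - ε) * lpNormW ω p f) ^ p ≤
      ∑ s, ∑ t, edgeP ω s t * ‖f t - markovW ω f s‖ ^ p := by
    rw [← Real.le_rpow_inv_iff_of_pos hr (Finset.sum_nonneg fun s _ => Finset.sum_nonneg
      fun t _ => mul_nonneg (edgeP_nonneg hnn s t) (by positivity)) hp0, ← one_div]
    linarith [lpNormW_le_add_edge hsym hnn hp f (markovW ω f)]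
  have hgrad : (1 + C) * ((1 - ε) * lpNormW ω p f) ^ p ≤
      ∑ s, ∑ t, edgeP ω s t * ‖f t - f s‖ ^ p := by
    linarith [energy_le_gradient hX hnn hdeg f, mul_le_mul_of_nonneg_left hb hC]
  calc (1 + C) ^ (1 / p) * (1 - ε) * lpNormW ω p f
      = ((1 + C) * ((1 - ε) * lpNormW ω p f) ^ p) ^ (1 / p) := by
        rw [Real.mul_rpow (by linarith) (by positivity), ← Real.rpow_mul hr,
          mul_one_div_cancel hp0.ne', Real.rpow_one, mul_assoc]
    _ ≤ gradNormW ω p f := Real.rpow_le_rpow (by positivity) hgrad (by positivity)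

theorem poincareConst_le [Nonempty V] [Module ℝ X] (hnn : NonnegW ω)
    (hdeg : ∀ s, 0 < wdeg ω s) {p K : ℝ} (hK : 0 ≤ K)
    (h : ∀ f : V → X, ∑ s, nu ω s • f s = 0 → lpNormW ω p f ≤ K * gradNormW ω p f) :
    poincareConst ω p X ≤ K := by
  refine csInf_le ⟨0, fun π hπ => hπ.1⟩ ⟨hK, fun f => ?_⟩
  set x₀ := ∑ s, nu ω s • f s
  have hmean : ∑ s, nu ω s • (f s - x₀) = 0 := by
    simp only [smul_sub, Finset.sum_sub_distrib, ← Finset.sum_smul, sum_nu hdeg, one_smul]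
    exact sub_self x₀
  calc (⨅ x : X, lpNormW ω p fun s => f s - x) ≤ lpNormW ω p fun s => f s - x₀ :=
        ciInf_le ⟨0, Set.forall_mem_range.2 fun x => lpNormW_nonneg hnn p _⟩ x₀
    _ ≤ K * gradNormW ω p f := by simpa only [gradNormW_sub_const] using h _ hmean

end WeightedGraph

theorem stmt3_general (p C : ℝ) (hp : 1 < p) (hC : 0 < C)
    (X : Type*) [NormedAddCommGroup X] [NormedSpace ℂ X]
    (hX : PUC X p C)
    (ε : ℝ) (hε1 : ε < 1)
    (hcond : 1 < (1 + C) ^ (1 / p) * (1 - ε))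
    {V : Type*} [Fintype V]
    (ω : V → V → ℝ) (hsym : SymmW ω) (hnn : NonnegW ω) (hconn : ConnW ω)
    (hdeg : ∀ s, 0 < wdeg ω s)
    (hA : ∀ f : V → X, (∑ s, nu ω s • f s) = 0 →
      lpNormW ω p (markovW ω f) ≤ ε * lpNormW ω p f) :
    (∀ f : V → X, (∑ s, nu ω s • f s) = 0 →
        lpNormW ω p f ≤ (1 + C) ^ (-(1 / p)) * (1 - ε)⁻¹ * gradNormW ω p f) ∧
      poincareConst ω p X ≤ (1 + C) ^ (-(1 / p)) * (1 - ε)⁻¹ ∧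
      (1 + C) ^ (-(1 / p)) * (1 - ε)⁻¹ < 1 := by
  have hK : (1 + C) ^ (-(1 / p)) * (1 - ε)⁻¹ = ((1 + C) ^ (1 / p) * (1 - ε))⁻¹ := by
    rw [Real.rpow_neg (by linarith), mul_inv]
  have hpoincare (f : V → X) (hf : ∑ s, nu ω s • f s = 0) :
      lpNormW ω p f ≤ (1 + C) ^ (-(1 / p)) * (1 - ε)⁻¹ * gradNormW ω p f := by
    rw [hK, inv_mul_eq_div, le_div_iff₀ (one_pos.trans hcond), mul_comm]
    exact mul_lpNormW_le_gradNormW hp.le hC.le hX hε1 hsym hnn hdeg f (hA f hf)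
  have : Nonempty V := hconn.nonempty
  refine ⟨hpoincare, poincareConst_le hnn hdeg ?_ hpoincare, ?_⟩ <;> rw [hK]
  · exact inv_nonneg.2 (one_pos.trans hcond).le
  · exact inv_lt_one_of_one_lt₀ hcond

/-- small Markov operator on `L^p_0(V,ν;X)` gives a Poincaré inequality with
constant `(1+C)^{-1/p}(1-ε)^{-1} < 1` for a `p`-uniformly convex space `X`. -/
theorem stmt3 (p C : ℝ) (hp : 1 < p) (hC : 0 < C)
    (X : Type*) [NormedAddCommGroup X] [NormedSpace ℂ X] [CompleteSpace X]
    (hX : PUC X p C)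
    (ε : ℝ) (hε0 : 0 ≤ ε) (hε1 : ε < 1)
    (hcond : 1 < (1 + C) ^ (1 / p) * (1 - ε))
    {V : Type*} [Fintype V]
    (ω : V → V → ℝ) (hsym : SymmW ω) (hnn : NonnegW ω) (hconn : ConnW ω)
    (hdeg : ∀ s, 0 < wdeg ω s)
    (hA : ∀ f : V → X, (∑ s, nu ω s • f s) = 0 →
      lpNormW ω p (markovW ω f) ≤ ε * lpNormW ω p f) :
    (∀ f : V → X, (∑ s, nu ω s • f s) = 0 →
        lpNormW ω p f ≤ (1 + C) ^ (-(1 / p)) * (1 - ε)⁻¹ * gradNormW ω p f) ∧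
      poincareConst ω p X ≤ (1 + C) ^ (-(1 / p)) * (1 - ε)⁻¹ ∧
      (1 + C) ^ (-(1 / p)) * (1 - ε)⁻¹ < 1 :=
  stmt3_general p C hp hC X hX ε hε1 hcond ω hsym hnn hconn hdeg hA
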